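/- For all x ∈ ℝ, the function 𝒲(x) = 𝒱(x)(𝒱(x) + x), where 𝒱(x) = φ(x)/Φ(x) is the inverse Mills ratio, satisfies 0 < 𝒲(x) < 1. -/

import Mathlib

open MeasureTheory

/-- Standard normal density. -/
noncomputable def stdNormalPDF (x : ℝ) : ℝ :=
  (Real.sqrt (2 * Real.pi))⁻¹ * Real.exp (-x ^ 2 / 2)

/-- Standard normal CDF. -/
noncomputable def stdNormalCDF (x : ℝ) : ℝ := ∫ u in Set.Iic x, stdNormalPDF u

/-- Inverse Mills ratio `𝒱(x) = φ(x)/Φ(x)`. -/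
noncomputable def millsV (x : ℝ) : ℝ := stdNormalPDF x / stdNormalCDF x

/-- `𝒲(x) = 𝒱(x)(𝒱(x) + x)`. -/
noncomputable def millsW (x : ℝ) : ℝ := millsV x * (millsV x + x)

/-!
Clearing denominators, `𝒲 = φ h / Φ²` with `h = φ + xΦ`, so the claim is `0 < h` and
`0 < g := Φ² - φ h`. Since `φ' = -xφ`, we get `Φ' = φ`, `h' = Φ`, `g' = φ k` with
`k = (1 + x²)Φ + xφ`, and `k' = 2h`. Mills' inequality `|x| Φ(x) ≤ φ(x)` for `x ≤ 0` shows that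
`Φ`, `h`, `k` and `g` all tend to `0` at `-∞`; a function with positive derivative and limit `0`
at `-∞` is positive, which gives in turn `Φ > 0`, `h > 0`, `k > 0` and `g > 0`.
-/

open Real Filter Set Topology

theorem StrictMono.lt_of_tendsto_atBot {α β : Type*} [TopologicalSpace α] [Preorder α]
    [OrderClosedTopology α] [PartialOrder β] [IsCodirectedOrder β] [NoMinOrder β] {f : β → α}
    {a : α} (hf : StrictMono f) (ha : Tendsto f atBot (𝓝 a)) (b : β) : a < f b := by
  obtain ⟨c, hc⟩ := exists_lt b
  exact (hf.monotone.le_of_tendsto ha c).trans_lt (hf hc)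

section StdNormal

local notation "φ" => stdNormalPDF
local notation "Φ" => stdNormalCDF

lemma stdNormalPDF_pos (x : ℝ) : 0 < φ x := by
  unfold stdNormalPDF
  positivity

lemma continuous_stdNormalPDF : Continuous φ := by
  unfold stdNormalPDF
  fun_prop

lemma hasDerivAt_stdNormalPDF (x : ℝ) : HasDerivAt φ (-x * φ x) x := by
  unfold stdNormalPDF
  refine (((hasDerivAt_pow 2 x).neg.div_const 2).exp.const_mul (√(2 * π))⁻¹).congr_deriv ?_
  simp only [Pi.neg_apply]
  push_cast
  ring

lemma integrable_stdNormalPDF : Integrable φ :=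
  ((integrable_exp_neg_mul_sq (b := 1 / 2) (by norm_num)).const_mul (√(2 * π))⁻¹).congr
    (.of_forall fun x => by simp only [stdNormalPDF]; ring_nf)

lemma integrable_mul_stdNormalPDF : Integrable fun x => x * φ x :=
  ((integrable_mul_exp_neg_mul_sq (b := 1 / 2) (by norm_num)).const_mul (√(2 * π))⁻¹).congr
    (.of_forall fun x => by simp only [stdNormalPDF]; ring_nf)

lemma tendsto_pow_mul_stdNormalPDF_cocompact (n : ℕ) :
    Tendsto (fun x => x ^ n * φ x) (cocompact ℝ) (𝓝 0) := by
  rw [tendsto_zero_iff_abs_tendsto_zero]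
  have h := (tendsto_rpow_abs_mul_exp_neg_mul_sq_cocompact (a := 1 / 2) (by norm_num) n).const_mul
    (√(2 * π))⁻¹
  rw [mul_zero] at h
  refine h.congr fun x => ?_
  rw [Function.comp_apply, abs_mul, abs_pow, abs_of_pos (stdNormalPDF_pos x), stdNormalPDF, rpow_natCast]
  ring_nf

lemma tendsto_pow_mul_stdNormalPDF_atBot (n : ℕ) :
    Tendsto (fun x => x ^ n * φ x) atBot (𝓝 0) :=
  (tendsto_pow_mul_stdNormalPDF_cocompact n).mono_left atBot_le_cocompact

lemma stdNormalCDF_nonneg (x : ℝ) : 0 ≤ Φ x :=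
  setIntegral_nonneg measurableSet_Iic fun u _ => (stdNormalPDF_pos u).le

lemma hasDerivAt_stdNormalCDF (x : ℝ) : HasDerivAt Φ (φ x) x := by
  have hΦ : Φ = fun y => Φ 0 + ∫ t in (0 : ℝ)..y, φ t := by
    funext y
    rw [← intervalIntegral.integral_Iic_sub_Iic integrable_stdNormalPDF.integrableOn
      integrable_stdNormalPDF.integrableOn]
    simp only [stdNormalCDF]
    ring
  rw [hΦ]
  exact (continuous_stdNormalPDF.integral_hasStrictDerivAt 0 x).hasDerivAt.const_add _

lemma integral_Iic_mul_stdNormalPDF (x : ℝ) : ∫ u in Iic x, u * φ u = -φ x := by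
  have h := integral_Iic_of_hasDerivAt_of_tendsto' (a := x) (f := fun u => -φ u)
    (fun u _ => (hasDerivAt_stdNormalPDF u).neg.congr_deriv (by ring))
    integrable_mul_stdNormalPDF.integrableOn
    (by simpa using (tendsto_pow_mul_stdNormalPDF_atBot 0).neg)
  simpa using h

lemma abs_mul_stdNormalCDF_le {x : ℝ} (hx : x ≤ 0) : |x| * Φ x ≤ φ x := by
  rw [abs_of_nonpos hx, ← neg_neg (φ x), ← integral_Iic_mul_stdNormalPDF, ← integral_neg,
    stdNormalCDF, ← integral_const_mul]
  refine setIntegral_mono_on (integrable_stdNormalPDF.integrableOn.const_mul _)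
    integrable_mul_stdNormalPDF.integrableOn.neg measurableSet_Iic fun u (hu : u ≤ x) => ?_
  nlinarith [stdNormalPDF_pos u]

lemma tendsto_pow_mul_stdNormalCDF_atBot (n : ℕ) :
    Tendsto (fun x => x ^ n * Φ x) atBot (𝓝 0) := by
  refine squeeze_zero_norm' ?_ (by simpa using (tendsto_pow_mul_stdNormalPDF_atBot n).norm)
  filter_upwards [eventually_le_atBot (-1)] with x hx
  have hx1 : 1 ≤ |x| := by rw [abs_of_neg (by linarith)]; linarith
  simp only [norm_mul, norm_pow, Real.norm_eq_abs]
  rw [abs_of_nonneg (stdNormalCDF_nonneg x), abs_of_pos (stdNormalPDF_pos x)]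
  calc |x| ^ n * Φ x ≤ |x| ^ n * (|x| * Φ x) := by
        gcongr; nlinarith [stdNormalCDF_nonneg x]
    _ ≤ |x| ^ n * φ x := by gcongr; exact abs_mul_stdNormalCDF_le (by linarith)

lemma stdNormalCDF_pos (x : ℝ) : 0 < Φ x :=
  (strictMono_of_hasDerivAt_pos hasDerivAt_stdNormalCDF stdNormalPDF_pos).lt_of_tendsto_atBot
    (by simpa using tendsto_pow_mul_stdNormalCDF_atBot 0) x

lemma stdNormalPDF_add_mul_stdNormalCDF_pos (x : ℝ) : 0 < φ x + x * Φ x := by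
  have hderiv (y : ℝ) : HasDerivAt (fun y => φ y + y * Φ y) (Φ y) y := by
    refine ((hasDerivAt_stdNormalPDF y).add
      ((hasDerivAt_id y).mul (hasDerivAt_stdNormalCDF y))).congr_deriv ?_
    simp only [id_eq]
    ring
  have hlim : Tendsto (fun y => φ y + y * Φ y) atBot (𝓝 0) := by
    simpa using (tendsto_pow_mul_stdNormalPDF_atBot 0).add (tendsto_pow_mul_stdNormalCDF_atBot 1)
  exact (strictMono_of_hasDerivAt_pos hderiv stdNormalCDF_pos).lt_of_tendsto_atBot hlim x

lemma one_add_sq_mul_stdNormalCDF_add_mul_stdNormalPDF_pos (x : ℝ) :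
    0 < (1 + x ^ 2) * Φ x + x * φ x := by
  have hderiv (y : ℝ) : HasDerivAt (fun y => (1 + y ^ 2) * Φ y + y * φ y)
      (2 * (φ y + y * Φ y)) y := by
    refine ((((hasDerivAt_pow 2 y).const_add 1).mul (hasDerivAt_stdNormalCDF y)).add
      ((hasDerivAt_id y).mul (hasDerivAt_stdNormalPDF y))).congr_deriv ?_
    simp only [id_eq]
    push_cast
    ring
  have hlim : Tendsto (fun y => (1 + y ^ 2) * Φ y + y * φ y) atBot (𝓝 0) := by
    simpa [add_mul] using ((tendsto_pow_mul_stdNormalCDF_atBot 0).add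
      (tendsto_pow_mul_stdNormalCDF_atBot 2)).add (tendsto_pow_mul_stdNormalPDF_atBot 1)
  exact (strictMono_of_hasDerivAt_pos hderiv fun y => by
    linarith [stdNormalPDF_add_mul_stdNormalCDF_pos y]).lt_of_tendsto_atBot hlim x

lemma stdNormalPDF_mul_lt_sq_stdNormalCDF (x : ℝ) : φ x * (φ x + x * Φ x) < Φ x ^ 2 := by
  rw [← sub_pos]
  have hderiv (y : ℝ) : HasDerivAt (fun y => Φ y ^ 2 - φ y * (φ y + y * Φ y))
      (φ y * ((1 + y ^ 2) * Φ y + y * φ y)) y := by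
    refine (((hasDerivAt_stdNormalCDF y).pow 2).sub ((hasDerivAt_stdNormalPDF y).mul
      ((hasDerivAt_stdNormalPDF y).add
        ((hasDerivAt_id y).mul (hasDerivAt_stdNormalCDF y))))).congr_deriv ?_
    simp only [id_eq, Pi.add_apply, Pi.mul_apply]
    push_cast
    ring
  have hlim : Tendsto (fun y => Φ y ^ 2 - φ y * (φ y + y * Φ y)) atBot (𝓝 0) := by
    simpa using ((tendsto_pow_mul_stdNormalCDF_atBot 0).pow 2).sub
      ((tendsto_pow_mul_stdNormalPDF_atBot 0).mul
        ((tendsto_pow_mul_stdNormalPDF_atBot 0).add (tendsto_pow_mul_stdNormalCDF_atBot 1)))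
  exact (strictMono_of_hasDerivAt_pos hderiv fun y => mul_pos (stdNormalPDF_pos y)
    (one_add_sq_mul_stdNormalCDF_add_mul_stdNormalPDF_pos y)).lt_of_tendsto_atBot hlim x

lemma millsW_eq (x : ℝ) : millsW x = φ x * (φ x + x * Φ x) / Φ x ^ 2 := by
  have hΦ := (stdNormalCDF_pos x).ne'
  unfold millsW millsV
  field_simp

end StdNormal

/-- For all real `x`, `0 < 𝒲(x) < 1`. -/
theorem millsW_pos_lt_one : ∀ x : ℝ, 0 < millsW x ∧ millsW x < 1 := by
  intro x
  have hΦ : 0 < stdNormalCDF x ^ 2 := pow_pos (stdNormalCDF_pos x) 2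
  rw [millsW_eq, div_lt_one hΦ]
  exact ⟨div_pos (mul_pos (stdNormalPDF_pos x) (stdNormalPDF_add_mul_stdNormalCDF_pos x)) hΦ,
    stdNormalPDF_mul_lt_sq_stdNormalCDF x⟩
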